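/- arXiv:2110.12901 — 2 statements merged into one kernel-verified Lean document; each statement's English description precedes it below -/
import Mathlib

section
/- Every NC formula whose clausal form is Horn is Horn-NC: for all NC formulas φ, if cl(φ) ∈ 𝓗 then φ ∈ 𝓡𝓗. -/
/-- Regular non-clausal (NC) formulas over propositional variables `P` and
truth values `T`: positive literals `X^{≥α}`, negative literals `X_{≤α}`,
conjunctions and disjunctions of lists of NC formulas. -/
inductive NC (P T : Type) : Type where
  | pos : P → T → NC P T
  | neg : P → T → NC P T
  | conj : List (NC P T) → NC P T
  | disj : List (NC P T) → NC P T

namespace NC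

variable {P T : Type}

/-- `HasPos φ` : a positive literal occurs in `φ` (φ is "non-negative"). -/
inductive HasPos : NC P T → Prop where
  | pos (x : P) (a : T) : HasPos (pos x a)
  | conj {l : List (NC P T)} {φ : NC P T} : φ ∈ l → HasPos φ → HasPos (conj l)
  | disj {l : List (NC P T)} {φ : NC P T} : φ ∈ l → HasPos φ → HasPos (disj l)

/-- `IsNeg φ` : φ is a negative NC formula (every literal in it is negative). -/
inductive IsNeg : NC P T → Prop where
  | neg (x : P) (a : T) : IsNeg (neg x a)
  | conj {l : List (NC P T)} : (∀ φ ∈ l, IsNeg φ) → IsNeg (conj l)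
  | disj {l : List (NC P T)} : (∀ φ ∈ l, IsNeg φ) → IsNeg (disj l)

/-- `Subf ψ φ` : ψ is a sub-formula of φ. -/
inductive Subf : NC P T → NC P T → Prop where
  | refl (φ : NC P T) : Subf φ φ
  | conj {l : List (NC P T)} {φ ψ : NC P T} : φ ∈ l → Subf ψ φ → Subf ψ (conj l)
  | disj {l : List (NC P T)} {φ ψ : NC P T} : φ ∈ l → Subf ψ φ → Subf ψ (disj l)

/-- At most one member of `l` contains a positive literal. -/
def AtMostOnePos (l : List (NC P T)) : Prop :=
  ∀ i j : Fin l.length, HasPos (l.get i) → HasPos (l.get j) → i = j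

/-- `φ` is Horn-NC: every disjunction occurring in `φ` (including `φ` itself if
it is a disjunction) has at most one disjunct in which a positive literal occurs. -/
def HornNC (φ : NC P T) : Prop :=
  ∀ l : List (NC P T), Subf (disj l) φ → AtMostOnePos l

/-- Well-formedness: every conjunction and disjunction has `k ≥ 1` members. -/
inductive WF : NC P T → Prop where
  | pos (x : P) (a : T) : WF (pos x a)
  | neg (x : P) (a : T) : WF (neg x a)
  | conj {l : List (NC P T)} : l ≠ [] → (∀ φ ∈ l, WF φ) → WF (conj l)
  | disj {l : List (NC P T)} : l ≠ [] → (∀ φ ∈ l, WF φ) → WF (disj l)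

/-- The {0,1}-valued interpretation of an NC formula under `I : P → T`
(`true` = 1, `false` = 0): `I(X^{≥α}) = 1` iff `I(X) ≥ α`,
`I(X_{≤α}) = 1 − I(X^{≥α})`, disjunction = max, conjunction = min. -/
def eval [LinearOrder T] (I : P → T) : NC P T → Bool
  | pos x a => decide (a ≤ I x)
  | neg x a => !decide (a ≤ I x)
  | conj l => l.attach.all (fun ⟨φ, _⟩ => eval I φ)
  | disj l => l.attach.any (fun ⟨φ, _⟩ => eval I φ)
decreasing_by
  all_goals
    have h := List.sizeOf_lt_of_mem ‹_›
    simp only [NC.conj.sizeOf_spec, NC.disj.sizeOf_spec]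
    omega

end NC

/-- Regular literals, as atoms of clausal formulas. -/
inductive Lit (P T : Type) : Type where
  | pos : P → T → Lit P T
  | neg : P → T → Lit P T

namespace Lit

variable {P T : Type}

def isPos : Lit P T → Bool
  | pos _ _ => true
  | neg _ _ => false

def toNC : Lit P T → NC P T
  | pos x a => NC.pos x a
  | neg x a => NC.neg x a

def eval [LinearOrder T] (I : P → T) : Lit P T → Bool
  | pos x a => decide (a ≤ I x)
  | neg x a => !decide (a ≤ I x)

end Lit

/-- All clauses `(∨ C1 … Ck)` with `Ci` a clause of the `i`-th clause list. -/
def clProd {P T : Type} : List (List (List (Lit P T))) → List (List (Lit P T))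
  | [] => [[]]
  | cs :: rest => cs.flatMap (fun c => (clProd rest).map (fun tail => c ++ tail))

/-- The clausal form `cl(φ)` of an NC formula, obtained by exhaustively applying
the ∨/∧ distributivity laws (a clausal formula is a list of clauses; a clause
is a list of regular literals). -/
def NC.cl {P T : Type} : NC P T → List (List (Lit P T))
  | .pos x a => [[Lit.pos x a]]
  | .neg x a => [[Lit.neg x a]]
  | .conj l => (l.attach.map (fun ⟨φ, _⟩ => NC.cl φ)).flatten
  | .disj l => clProd (l.attach.map (fun ⟨φ, _⟩ => NC.cl φ))
decreasing_by
  all_goals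
    have h := List.sizeOf_lt_of_mem ‹_›
    simp only [NC.conj.sizeOf_spec, NC.disj.sizeOf_spec]
    omega

/-- A regular Horn clause: at most one positive literal. -/
def HornClause {P T : Type} (C : List (Lit P T)) : Prop := C.countP Lit.isPos ≤ 1

/-- A regular Horn (clausal) formula: a conjunction of Horn clauses (`𝓗`). -/
def HornClausal {P T : Type} (F : List (List (Lit P T))) : Prop := ∀ C ∈ F, HornClause C

/-- The {0,1}-valued interpretation of a clausal formula. -/
def evalClausal {P T : Type} [LinearOrder T] (I : P → T) (F : List (List (Lit P T))) : Bool :=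
  F.all (fun C => C.any (Lit.eval I))

/-- A clausal formula regarded as an NC formula. -/
def clausalToNC {P T : Type} (F : List (List (Lit P T))) : NC P T :=
  NC.conj (F.map (fun C => NC.disj (C.map Lit.toNC)))

section AuxLemmas

variable {P T : Type}

lemma clProd_exists {css : List (List (List (Lit P T)))}
    (h : ∀ cs ∈ css, cs ≠ []) : ∃ D, D ∈ clProd css := by
  induction css with
  | nil => exact ⟨[], by simp [clProd]⟩
  | cons cs rest ih =>
    obtain ⟨c, hc⟩ := List.exists_mem_of_ne_nil cs (h cs (by simp))
    obtain ⟨D, hD⟩ := ih (fun x hx => h x (List.mem_cons_of_mem _ hx))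
    refine ⟨c ++ D, ?_⟩
    simp only [clProd, List.mem_flatMap]
    exact ⟨c, hc, List.mem_map.2 ⟨D, hD, rfl⟩⟩

lemma clProd_sublist : ∀ (css : List (List (List (Lit P T)))) (i : ℕ) (hi : i < css.length),
    (∀ cs ∈ css, cs ≠ []) → ∀ c ∈ css[i], ∃ D ∈ clProd css, c.Sublist D := by
  intro css
  induction css with
  | nil => intro i hi; simp at hi
  | cons cs rest ih =>
    intro i hi hne c hc
    match i with
    | 0 =>
      obtain ⟨D, hD⟩ := clProd_exists (fun x hx => hne x (List.mem_cons_of_mem _ hx))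
      refine ⟨c ++ D, ?_, List.sublist_append_left _ _⟩
      simp only [clProd, List.mem_flatMap]
      exact ⟨c, by simpa using hc, List.mem_map.2 ⟨D, hD, rfl⟩⟩
    | (i+1) =>
      obtain ⟨c0, hc0⟩ := List.exists_mem_of_ne_nil cs (hne cs (by simp))
      obtain ⟨D, hD, hsub⟩ := ih i (by simpa using hi)
        (fun x hx => hne x (List.mem_cons_of_mem _ hx)) c (by simpa using hc)
      refine ⟨c0 ++ D, ?_, hsub.trans (List.sublist_append_right _ _)⟩
      simp only [clProd, List.mem_flatMap]
      exact ⟨c0, hc0, List.mem_map.2 ⟨D, hD, rfl⟩⟩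

lemma clProd_two : ∀ (css : List (List (List (Lit P T)))) (i j : ℕ) (hij : i < j)
    (hj : j < css.length),
    (∀ cs ∈ css, cs ≠ []) → ∀ Ci ∈ css[i]'(hij.trans hj), ∀ Cj ∈ css[j],
    ∃ D ∈ clProd css, Ci.countP Lit.isPos + Cj.countP Lit.isPos ≤ D.countP Lit.isPos := by
  intro css
  induction css with
  | nil => intro i j hij hj; simp at hj
  | cons cs rest ih =>
    intro i j hij hj hne Ci hCi Cj hCj
    obtain ⟨j, rfl⟩ : ∃ j', j = j' + 1 := ⟨j - 1, by omega⟩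
    match i with
    | 0 =>
      obtain ⟨D, hD, hsub⟩ := clProd_sublist rest j (by simpa using hj)
        (fun x hx => hne x (List.mem_cons_of_mem _ hx)) Cj (by simpa using hCj)
      refine ⟨Ci ++ D, ?_, ?_⟩
      · simp only [clProd, List.mem_flatMap]
        exact ⟨Ci, by simpa using hCi, List.mem_map.2 ⟨D, hD, rfl⟩⟩
      · rw [List.countP_append]
        exact Nat.add_le_add le_rfl hsub.countP_le
    | (i+1) =>
      obtain ⟨c0, hc0⟩ := List.exists_mem_of_ne_nil cs (hne cs (by simp))
      obtain ⟨D, hD, hle⟩ := ih i j (by omega) (by simpa using hj)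
        (fun x hx => hne x (List.mem_cons_of_mem _ hx)) Ci (by simpa using hCi) Cj (by simpa using hCj)
      refine ⟨c0 ++ D, ?_, ?_⟩
      · simp only [clProd, List.mem_flatMap]
        exact ⟨c0, hc0, List.mem_map.2 ⟨D, hD, rfl⟩⟩
      · rw [List.countP_append]; omega

lemma NC.cl_conj (l : List (NC P T)) :
    (NC.conj l).cl = (l.attach.map (fun x => x.1.cl)).flatten := by
  rw [NC.cl]

lemma NC.cl_disj (l : List (NC P T)) :
    (NC.disj l).cl = clProd (l.attach.map (fun x => x.1.cl)) := by
  rw [NC.cl]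

lemma css_get (l : List (NC P T)) (i : ℕ) (hi : i < l.length) :
    (l.attach.map (fun x => x.1.cl))[i]'(by simpa using hi) = (l[i]).cl := by
  simp

lemma NC.cl_exists {φ : NC P T} (h : NC.WF φ) : ∃ C, C ∈ φ.cl := by
  induction h with
  | pos x a => exact ⟨[Lit.pos x a], by simp [NC.cl]⟩
  | neg x a => exact ⟨[Lit.neg x a], by simp [NC.cl]⟩
  | @conj l hne hwf ih =>
    obtain ⟨ψ, hψ⟩ := List.exists_mem_of_ne_nil l hne
    obtain ⟨C, hC⟩ := ih ψ hψ
    refine ⟨C, ?_⟩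
    rw [NC.cl_conj]
    exact List.mem_flatten.2 ⟨ψ.cl, List.mem_map.2 ⟨⟨ψ, hψ⟩, List.mem_attach _ _, rfl⟩, hC⟩
  | @disj l hne hwf ih =>
    rw [NC.cl_disj]
    apply clProd_exists
    intro cs hcs
    obtain ⟨⟨ψ, hψ⟩, _, rfl⟩ := List.mem_map.1 hcs
    obtain ⟨C, hC⟩ := ih ψ hψ
    exact List.ne_nil_of_mem hC

lemma NC.cl_ne_nil {φ : NC P T} (h : NC.WF φ) : φ.cl ≠ [] := by
  obtain ⟨C, hC⟩ := NC.cl_exists h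
  exact List.ne_nil_of_mem hC

lemma css_ne (l : List (NC P T)) (h : ∀ ψ ∈ l, NC.WF ψ) :
    ∀ cs ∈ l.attach.map (fun x => x.1.cl), cs ≠ [] := by
  intro cs hcs
  obtain ⟨⟨ψ, hψ⟩, _, rfl⟩ := List.mem_map.1 hcs
  exact NC.cl_ne_nil (h ψ hψ)

lemma NC.hasPos_clause {φ : NC P T} (hp : NC.HasPos φ) :
    NC.WF φ → ∃ C ∈ φ.cl, 1 ≤ C.countP Lit.isPos := by
  induction hp with
  | pos x a => exact fun _ => ⟨[Lit.pos x a], by simp [NC.cl], by simp [Lit.isPos]⟩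
  | @conj l ψ hmem hp ih =>
    intro hwf
    cases hwf with
    | conj hne hwfl =>
      obtain ⟨C, hC, hcnt⟩ := ih (hwfl ψ hmem)
      refine ⟨C, ?_, hcnt⟩
      rw [NC.cl_conj]
      exact List.mem_flatten.2 ⟨ψ.cl, List.mem_map.2 ⟨⟨ψ, hmem⟩, List.mem_attach _ _, rfl⟩, hC⟩
  | @disj l ψ hmem hp ih =>
    intro hwf
    cases hwf with
    | disj hne hwfl =>
      obtain ⟨C, hC, hcnt⟩ := ih (hwfl ψ hmem)
      obtain ⟨i, hi, rfl⟩ := List.mem_iff_getElem.1 hmem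
      obtain ⟨D, hD, hsub⟩ := clProd_sublist (l.attach.map (fun x => x.1.cl)) i
        (by simpa using hi) (css_ne l hwfl) C (by rw [css_get l i hi]; exact hC)
      refine ⟨D, ?_, le_trans hcnt hsub.countP_le⟩
      rw [NC.cl_disj]; exact hD

lemma NC.wf_subf {ψ φ : NC P T} (hs : NC.Subf ψ φ) : NC.WF φ → NC.WF ψ := by
  induction hs with
  | refl => exact id
  | conj hmem _ ih =>
    intro h; cases h with | conj hne hwfl => exact ih (hwfl _ hmem)
  | disj hmem _ ih =>
    intro h; cases h with | disj hne hwfl => exact ih (hwfl _ hmem)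

lemma NC.subf_clause {ψ φ : NC P T} (hs : NC.Subf ψ φ) :
    NC.WF φ → ∀ C ∈ ψ.cl, ∃ D ∈ φ.cl, C.Sublist D := by
  induction hs with
  | refl φ => exact fun _ C hC => ⟨C, hC, List.Sublist.refl C⟩
  | @conj l χ ψ hmem hsub ih =>
    intro hwf C hC
    cases hwf with
    | conj hne hwfl =>
      obtain ⟨D, hD, hle⟩ := ih (hwfl _ hmem) C hC
      refine ⟨D, ?_, hle⟩
      rw [NC.cl_conj]
      exact List.mem_flatten.2 ⟨χ.cl, List.mem_map.2 ⟨⟨χ, hmem⟩, List.mem_attach _ _, rfl⟩, hD⟩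
  | @disj l χ ψ hmem hsub ih =>
    intro hwf C hC
    cases hwf with
    | disj hne hwfl =>
      obtain ⟨D, hD, hle⟩ := ih (hwfl _ hmem) C hC
      obtain ⟨i, hi, rfl⟩ := List.mem_iff_getElem.1 hmem
      obtain ⟨E, hE, hsub'⟩ := clProd_sublist (l.attach.map (fun x => x.1.cl)) i
        (by simpa using hi) (css_ne l hwfl) D (by rw [css_get l i hi]; exact hD)
      refine ⟨E, ?_, hle.trans hsub'⟩
      rw [NC.cl_disj]; exact hE

lemma disj_two_pos {l : List (NC P T)} (hwfl : ∀ ψ ∈ l, NC.WF ψ)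
    {i j : ℕ} (hij : i < j) (hj : j < l.length)
    (hpi : NC.HasPos (l[i]'(hij.trans hj))) (hpj : NC.HasPos l[j]) :
    ∃ D ∈ (NC.disj l).cl, 2 ≤ D.countP Lit.isPos := by
  obtain ⟨Ci, hCi, hci⟩ := NC.hasPos_clause hpi (hwfl _ (List.getElem_mem _))
  obtain ⟨Cj, hCj, hcj⟩ := NC.hasPos_clause hpj (hwfl _ (List.getElem_mem _))
  obtain ⟨D, hD, hle⟩ := clProd_two (l.attach.map (fun x => x.1.cl)) i j hij
    (by simpa using hj) (css_ne l hwfl)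
    Ci (by rw [css_get l i (hij.trans hj)]; exact hCi)
    Cj (by rw [css_get l j hj]; exact hCj)
  refine ⟨D, ?_, by omega⟩
  rw [NC.cl_disj]; exact hD

end AuxLemmas

/-- every NC formula whose clausal form is Horn is Horn-NC. -/
theorem stmt8 {P T : Type} [Countable P] [LinearOrder T]
    (φ : NC P T) (hwf : NC.WF φ) (h : HornClausal φ.cl) :
    NC.HornNC φ := by
  intro l hsub i j hpi hpj
  by_contra hij
  have hwfd : NC.WF (NC.disj l) := NC.wf_subf hsub hwf
  have hwfl : ∀ ψ ∈ l, NC.WF ψ := by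
    cases hwfd with | disj hne hw => exact hw
  have hpi' : NC.HasPos (l[(i : ℕ)]) := by simpa [List.get_eq_getElem] using hpi
  have hpj' : NC.HasPos (l[(j : ℕ)]) := by simpa [List.get_eq_getElem] using hpj
  have key : ∃ D ∈ (NC.disj l).cl, 2 ≤ D.countP Lit.isPos := by
    rcases lt_trichotomy (i : ℕ) (j : ℕ) with hlt | heq | hgt
    · exact disj_two_pos hwfl hlt j.isLt hpi' hpj'
    · exact absurd (Fin.ext heq) hij
    · exact disj_two_pos hwfl hgt i.isLt hpj' hpi'
  obtain ⟨D, hD, hD2⟩ := key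
  obtain ⟨E, hE, hsubE⟩ := NC.subf_clause hsub hwf D hD
  have := h E hE
  have : D.countP Lit.isPos ≤ E.countP Lit.isPos := hsubE.countP_le
  unfold HornClause at *
  omega
end

section
/- Soundness of the Regular NC Unit-Resolution rule (RUR): let X ∈ 𝒫 and α, β ∈ 𝒯 with α > β. Then for every interpretation I with I(X^{≥α}) = 1 one has I(X_{≤β}) = 0, and consequently for all NC formulas φ1,…,φk the conjunction {∧ X^{≥α} (∨ φ1 … φ_{j} X_{≤β} φ_{j+1} … φk)} is logically equivalent to {∧ X^{≥α} (∨ φ1 … φ_{j} φ_{j+1} … φk)}. -/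
lemma NC.eval_disj {P T : Type} [LinearOrder T] (I : P → T) (l : List (NC P T)) :
    NC.eval I (NC.disj l) = l.any (NC.eval I) := by
  rw [NC.eval]; simp [List.any_eq]

lemma NC.eval_conj {P T : Type} [LinearOrder T] (I : P → T) (l : List (NC P T)) :
    NC.eval I (NC.conj l) = l.all (NC.eval I) := by
  rw [NC.eval]; simp [List.all_eq]

/-- soundness of Regular NC Unit-Resolution (RUR): if α > β then every
interpretation satisfying X^{≥α} falsifies X_{≤β}, and consequently
{∧ X^{≥α} (∨ φ1 … φj X_{≤β} φ_{j+1} … φk)} ≡ {∧ X^{≥α} (∨ φ1 … φj φ_{j+1} … φk)}. -/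
theorem stmt14 {P T : Type} [Countable P] [LinearOrder T]
    (X : P) (α β : T) (h : β < α) :
    (∀ I : P → T, NC.eval I (NC.pos X α) = true → NC.eval I (NC.neg X β) = false) ∧
    (∀ (l₁ l₂ : List (NC P T)) (I : P → T),
      NC.eval I (NC.conj [NC.pos X α, NC.disj (l₁ ++ NC.neg X β :: l₂)]) =
        NC.eval I (NC.conj [NC.pos X α, NC.disj (l₁ ++ l₂)])) := by
  constructor
  · intro I hI
    simp only [NC.eval, decide_eq_true_eq] at hI ⊢
    simp [le_trans h.le hI]
  · intro l₁ l₂ I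
    simp only [NC.eval_conj, NC.eval_disj, List.all_cons, List.all_nil,
      List.any_append, List.any_cons]
    by_cases hx : α ≤ I X
    · have : NC.eval I (NC.neg X β) = false := by
        simp [NC.eval, le_trans h.le hx]
      simp [NC.eval, hx, this, Bool.or_left_comm]
    · simp [NC.eval, hx]
end
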